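/- Fix F > 0 with F² > 1. Let w : ℝ × [0,1] → ℝ be continuous and bounded, harmonic on the open half-strip ℝ × (0,1), such that ∂_η w extends continuously to the top boundary {η = 1}. Suppose w(ξ,0) = 0 for all ξ ∈ ℝ, ∂_η w(ξ,1) = w(ξ,1)/F² for all ξ ∈ ℝ, and w(ξ,η) → 0 as |ξ| → ∞, uniformly in η ∈ [0,1]. Then w ≡ 0. -/

import Mathlib

/-!
If `w` took a positive value, decay at infinity and compactness would give a maximum `M > 0` of
`w` on the closed strip. The maximum principle on large rectangles, applied to `w - M η`, gives
`w ≤ M η`: this is where the supersolution `η` enters. Hence the maximum is attained on the top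
`{η = 1}`, where therefore `∂_η w ≥ M`, contradicting the Robin condition `∂_η w = M / F² < M`.
The same applied to `-w` gives `w = 0`.
-/

open Set

/-- Partial derivative in the first (horizontal) variable. -/
noncomputable def pdx (w : ℝ × ℝ → ℝ) : ℝ × ℝ → ℝ :=
  fun p => deriv (fun x => w (x, p.2)) p.1

/-- Partial derivative in the second (vertical) variable. -/
noncomputable def pdy (w : ℝ × ℝ → ℝ) : ℝ × ℝ → ℝ :=
  fun p => deriv (fun y => w (p.1, y)) p.2

/-- `w` is harmonic on the set `s ⊆ ℝ²`: it is `C²` there and satisfies Laplace's equation. -/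
def HarmonicOnR2 (w : ℝ × ℝ → ℝ) (s : Set (ℝ × ℝ)) : Prop :=
  ContDiffOn ℝ 2 w s ∧ ∀ p ∈ s, pdx (pdx w) p + pdy (pdy w) p = 0

open Filter Topology

theorem IsLocalMax.deriv_deriv_nonpos {f : ℝ → ℝ} {a : ℝ} (h : IsLocalMax f a)
    (hc : ContinuousAt f a) : deriv (deriv f) a ≤ 0 := by
  by_contra! hpos
  -- If `f'' a > 0`, then `a` is also a local minimum, so `f` is locally constant.
  have hmin := isLocalMin_of_deriv_deriv_pos hpos h.deriv_eq_zero hc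
  have hconst : f =ᶠ[𝓝 a] fun _ => f a := (h.and hmin).mono fun x hx => le_antisymm hx.1 hx.2
  simp [hconst.deriv.deriv_eq] at hpos

theorem deriv_deriv_add {f g : ℝ → ℝ} {x : ℝ} (hf : ContDiffAt ℝ 2 f x)
    (hg : ContDiffAt ℝ 2 g x) :
    deriv (deriv (f + g)) x = deriv (deriv f) x + deriv (deriv g) x := by
  simpa [iteratedDerivWithin_univ, iteratedDeriv_eq_iterate] using
    iteratedDerivWithin_add (mem_univ x) uniqueDiffOn_univ hf.contDiffWithinAt hg.contDiffWithinAt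

section PartialDerivatives

variable {u v : ℝ × ℝ → ℝ} {p : ℝ × ℝ}

theorem ContDiffAt.slice_fst {n : WithTop ℕ∞} (hu : ContDiffAt ℝ n u p) :
    ContDiffAt ℝ n (fun x => u (x, p.2)) p.1 :=
  hu.comp p.1 (contDiffAt_id.prodMk contDiffAt_const)

theorem ContDiffAt.slice_snd {n : WithTop ℕ∞} (hu : ContDiffAt ℝ n u p) :
    ContDiffAt ℝ n (fun y => u (p.1, y)) p.2 :=
  hu.comp p.2 (contDiffAt_const.prodMk contDiffAt_id)

theorem IsLocalMax.pdx_pdx_nonpos (h : IsLocalMax u p) (hc : ContinuousAt u p) :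
    pdx (pdx u) p ≤ 0 :=
  (h.comp_continuous (continuous_id.prodMk continuous_const).continuousAt).deriv_deriv_nonpos
    (hc.comp (continuous_id.prodMk continuous_const).continuousAt)

theorem IsLocalMax.pdy_pdy_nonpos (h : IsLocalMax u p) (hc : ContinuousAt u p) :
    pdy (pdy u) p ≤ 0 :=
  (h.comp_continuous (continuous_const.prodMk continuous_id).continuousAt).deriv_deriv_nonpos
    (hc.comp (continuous_const.prodMk continuous_id).continuousAt)

theorem pdx_pdx_add (hu : ContDiffAt ℝ 2 u p) (hv : ContDiffAt ℝ 2 v p) :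
    pdx (pdx (u + v)) p = pdx (pdx u) p + pdx (pdx v) p :=
  deriv_deriv_add hu.slice_fst hv.slice_fst

theorem pdy_pdy_add (hu : ContDiffAt ℝ 2 u p) (hv : ContDiffAt ℝ 2 v p) :
    pdy (pdy (u + v)) p = pdy (pdy u) p + pdy (pdy v) p :=
  deriv_deriv_add hu.slice_snd hv.slice_snd

theorem pdx_neg : pdx (-u) = -pdx u :=
  funext fun _ => deriv.neg

theorem pdy_neg : pdy (-u) = -pdy u :=
  funext fun _ => deriv.neg

theorem HarmonicOnR2.neg {s : Set (ℝ × ℝ)} (h : HarmonicOnR2 u s) : HarmonicOnR2 (-u) s := by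
  refine ⟨h.1.neg, fun p hp => ?_⟩
  simp only [pdx_neg, pdy_neg, Pi.neg_apply]
  linarith [h.2 p hp]

end PartialDerivatives

theorem le_of_boundary_le_of_laplacian_pos {K : Set (ℝ × ℝ)} (hK : IsCompact K)
    {v : ℝ × ℝ → ℝ} (hv : ContinuousOn v K)
    (hlap : ∀ p ∈ interior K, 0 < pdx (pdx v) p + pdy (pdy v) p) {B : ℝ}
    (hbdry : ∀ p ∈ K \ interior K, v p ≤ B) : ∀ p ∈ K, v p ≤ B := by
  intro p hp
  obtain ⟨p₀, hp₀, hmax⟩ := hK.exists_isMaxOn ⟨p, hp⟩ hv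
  refine (hmax hp).trans ?_
  by_cases hint : p₀ ∈ interior K
  · have hnhds : K ∈ 𝓝 p₀ := mem_interior_iff_mem_nhds.1 hint
    have hloc : IsLocalMax v p₀ := hmax.isLocalMax hnhds
    have hc : ContinuousAt v p₀ := hv.continuousAt hnhds
    linarith [hloc.pdx_pdx_nonpos hc, hloc.pdy_pdy_nonpos hc, hlap p₀ hint]
  · exact hbdry p₀ ⟨hp₀, hint⟩

theorem exists_isMaxOn_strip_of_decay {T : Set ℝ} (hT : IsCompact T) {w : ℝ × ℝ → ℝ}
    (hcont : ContinuousOn w (univ ×ˢ T))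
    (hdecay : ∀ ε > 0, ∃ R : ℝ, ∀ p : ℝ × ℝ, R ≤ |p.1| → p.2 ∈ T → w p < ε)
    {q : ℝ × ℝ} (hq : q ∈ univ ×ˢ T) (hwq : 0 < w q) :
    ∃ p₀ ∈ univ ×ˢ T, IsMaxOn w (univ ×ˢ T) p₀ := by
  obtain ⟨R, hR⟩ := hdecay (w q) hwq
  set K := Icc (-max R |q.1|) (max R |q.1|) ×ˢ T
  have hqK : q ∈ K := ⟨abs_le.1 (le_max_right _ _), hq.2⟩
  obtain ⟨p₀, hp₀, hmax⟩ :=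
    (isCompact_Icc.prod hT).exists_isMaxOn ⟨q, hqK⟩ (hcont.mono fun p hp => ⟨trivial, hp.2⟩)
  refine ⟨p₀, ⟨trivial, hp₀.2⟩, fun p hp => ?_⟩
  by_cases hpK : |p.1| ≤ max R |q.1|
  · exact hmax ⟨abs_le.1 hpK, hp.2⟩
  · have hRp : R ≤ |p.1| := (le_max_left _ _).trans (not_le.1 hpK).le
    exact ((hR p hRp hp.2).trans_le (hmax hqK)).le

theorem pdy_pdy_quadratic (a b : ℝ) (p : ℝ × ℝ) :
    pdy (pdy fun q : ℝ × ℝ => a * q.2 ^ 2 - b * q.2) p = 2 * a := by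
  have hderiv : deriv (fun y : ℝ => a * y ^ 2 - b * y) = fun y => 2 * a * y - b := by
    funext y
    rw [(((hasDerivAt_pow 2 y).const_mul a).fun_sub ((hasDerivAt_id' y).const_mul b)).deriv]
    push_cast
    ring
  simp [pdy, hderiv]

theorem le_mul_snd_of_harmonicOn_strip {w : ℝ × ℝ → ℝ} {B : ℝ} (hB : 0 ≤ B)
    (hcont : ContinuousOn w (univ ×ˢ Icc (0 : ℝ) 1))
    (hharm : HarmonicOnR2 w (univ ×ˢ Ioo (0 : ℝ) 1))
    (hbed : ∀ ξ : ℝ, w (ξ, 0) ≤ 0) (htop : ∀ ξ : ℝ, w (ξ, 1) ≤ B)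
    (hdecay : ∀ ε > 0, ∃ R : ℝ, ∀ p : ℝ × ℝ, R ≤ |p.1| → p.2 ∈ Icc (0 : ℝ) 1 → w p < ε) :
    ∀ p : ℝ × ℝ, p.2 ∈ Icc (0 : ℝ) 1 → w p ≤ B * p.2 := by
  intro p hp
  refine le_of_forall_pos_lt_add fun ε hε => ?_
  obtain ⟨R₀, hR₀⟩ := hdecay (ε / 3) (by positivity)
  set R := max R₀ |p.1|
  set K := Icc (-R) R ×ˢ Icc (0 : ℝ) 1
  -- The term `(ε/3) η²` makes `w - B η` a strict subsolution.
  set q : ℝ × ℝ → ℝ := fun q => ε / 3 * q.2 ^ 2 - B * q.2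
  have hqcont : Continuous q := by fun_prop
  have hinterior : interior K = Ioo (-R) R ×ˢ Ioo (0 : ℝ) 1 := by
    simp only [K, interior_prod_eq, interior_Icc]
  have hlap : ∀ p ∈ interior K, 0 < pdx (pdx (w + q)) p + pdy (pdy (w + q)) p := by
    intro p hp
    rw [hinterior] at hp
    have hw : ContDiffAt ℝ 2 w p :=
      hharm.1.contDiffAt ((isOpen_univ.prod isOpen_Ioo).mem_nhds ⟨trivial, hp.2⟩)
    have hq : ContDiffAt ℝ 2 q p := by fun_prop
    have hq_xx : pdx (pdx q) p = 0 := by simp [pdx, q]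
    rw [pdx_pdx_add hw hq, pdy_pdy_add hw hq, hq_xx, pdy_pdy_quadratic]
    linarith [hharm.2 p ⟨trivial, hp.2⟩]
  have hbdry : ∀ p ∈ K \ interior K, (w + q) p ≤ 2 * (ε / 3) := by
    rintro ⟨ξ, η⟩ ⟨⟨-, hη⟩, hnot⟩
    rw [hinterior] at hnot
    have hq_le : q (ξ, η) ≤ ε / 3 := by
      have hη2 : η ^ 2 ≤ 1 := pow_le_one₀ hη.1 hη.2
      simp only [q]
      nlinarith [mul_nonneg hB hη.1]
    simp only [Pi.add_apply]
    rcases hη.1.eq_or_lt with rfl | hη₀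
    · simp only [q]; linarith [hbed ξ]
    rcases hη.2.eq_or_lt with rfl | hη₁
    · simp only [q]; linarith [htop ξ]
    have hξR : R ≤ |ξ| := by
      by_contra! h
      exact hnot ⟨abs_lt.1 h, hη₀, hη₁⟩
    linarith [hR₀ (ξ, η) ((le_max_left _ _).trans hξR) hη]
  have hpK : p ∈ K := ⟨abs_le.1 (le_max_right _ _), hp⟩
  have hvp := le_of_boundary_le_of_laplacian_pos (isCompact_Icc.prod isCompact_Icc)
    ((hcont.mono fun p hp => ⟨trivial, hp.2⟩).add hqcont.continuousOn) hlap hbdry p hpK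
  simp only [Pi.add_apply, q] at hvp
  nlinarith [hp.1, hp.2]

theorem le_of_tendsto_deriv_of_le_line {f : ℝ → ℝ} {a b m l : ℝ} (hab : a < b)
    (hdiff : DifferentiableOn ℝ f (Ioo a b)) (hcont : ContinuousWithinAt f (Ioo a b) b)
    (hline : ∀ y ∈ Ioo a b, f y ≤ f b - m * (b - y))
    (hlim : Tendsto (deriv f) (𝓝[<] b) (𝓝 l)) : m ≤ l := by
  have hderiv : HasDerivWithinAt f l (Iio b) b :=
    (hasDerivWithinAt_Iic_of_tendsto_deriv hdiff hcont (Ioo_mem_nhdsLT hab) hlim).mono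
      Iio_subset_Iic_self
  refine ge_of_tendsto ((hasDerivWithinAt_iff_tendsto_slope' self_notMem_Iio).1 hderiv) ?_
  filter_upwards [Ioo_mem_nhdsLT hab] with y hy
  rw [slope_def_field, le_div_iff_of_neg (sub_neg.2 hy.2)]
  linarith [hline y hy]

theorem nonpos_of_robin_condition {κ : ℝ} (hκ : κ < 1) {w g : ℝ × ℝ → ℝ}
    (hcont : ContinuousOn w (univ ×ˢ Icc (0 : ℝ) 1))
    (hharm : HarmonicOnR2 w (univ ×ˢ Ioo (0 : ℝ) 1))
    (hg : ContinuousOn g (univ ×ˢ Ioc (0 : ℝ) 1))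
    (hge : ∀ p : ℝ × ℝ, p.2 ∈ Ioo (0 : ℝ) 1 → g p = pdy w p)
    (hbed : ∀ ξ : ℝ, w (ξ, 0) ≤ 0) (htop : ∀ ξ : ℝ, g (ξ, 1) = κ * w (ξ, 1))
    (hdecay : ∀ ε > 0, ∃ R : ℝ, ∀ p : ℝ × ℝ, R ≤ |p.1| → p.2 ∈ Icc (0 : ℝ) 1 → w p < ε) :
    ∀ p : ℝ × ℝ, p.2 ∈ Icc (0 : ℝ) 1 → w p ≤ 0 := by
  by_contra! ⟨q, hq, hwq⟩
  obtain ⟨⟨ξ₀, η₀⟩, hp₀, hmax⟩ :=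
    exists_isMaxOn_strip_of_decay isCompact_Icc hcont hdecay ⟨trivial, hq⟩ hwq
  set M := w (ξ₀, η₀)
  have hM : 0 < M := hwq.trans_le (hmax ⟨trivial, hq⟩)
  have hcomp := le_mul_snd_of_harmonicOn_strip hM.le hcont hharm hbed
    (fun ξ => hmax ⟨trivial, zero_le_one, le_rfl⟩) hdecay
  have hη₀ : η₀ = 1 := by
    have := hcomp (ξ₀, η₀) hp₀.2
    nlinarith [hp₀.2.2]
  subst hη₀
  have hslice_cont : ContinuousWithinAt (fun y => w (ξ₀, y)) (Ioo 0 1) 1 :=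
    ((hcont (ξ₀, 1) hp₀).comp (by fun_prop : Continuous fun y : ℝ => (ξ₀, y)).continuousWithinAt
      fun y hy => ⟨trivial, hy⟩).mono Ioo_subset_Icc_self
  have hslice_diff : DifferentiableOn ℝ (fun y => w (ξ₀, y)) (Ioo 0 1) := fun y hy =>
    ((hharm.1.contDiffAt ((isOpen_univ.prod isOpen_Ioo).mem_nhds ⟨trivial, hy⟩)).slice_snd
      (p := (ξ₀, y))).differentiableAt two_ne_zero |>.differentiableWithinAt
  have hlim : Tendsto (deriv fun y => w (ξ₀, y)) (𝓝[<] 1) (𝓝 (g (ξ₀, 1))) := by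
    have hg_slice : ContinuousWithinAt (fun y => g (ξ₀, y)) (Ioo 0 1) 1 :=
      ((hg (ξ₀, 1) ⟨trivial, one_pos, le_rfl⟩).comp
        (by fun_prop : Continuous fun y : ℝ => (ξ₀, y)).continuousWithinAt
        fun y hy => ⟨trivial, hy⟩).mono Ioo_subset_Ioc_self
    rw [ContinuousWithinAt, nhdsWithin_Ioo_eq_nhdsLT one_pos] at hg_slice
    refine hg_slice.congr' ?_
    filter_upwards [Ioo_mem_nhdsLT one_pos] with y hy using hge (ξ₀, y) hy
  have hslope : M ≤ g (ξ₀, 1) := le_of_tendsto_deriv_of_le_line one_pos hslice_diff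
    hslice_cont (fun y hy => by linarith [hcomp (ξ₀, y) (Ioo_subset_Icc_self hy)]) hlim
  rw [htop] at hslope
  nlinarith

theorem statement4_general (F : ℝ) (hF : 1 < F ^ 2)
    (w : ℝ × ℝ → ℝ)
    (hcont : ContinuousOn w (univ ×ˢ Icc (0 : ℝ) 1))
    (hharm : HarmonicOnR2 w (univ ×ˢ Ioo (0 : ℝ) 1))
    -- `∂_η w` extends continuously to the top boundary, with extension `g`
    (g : ℝ × ℝ → ℝ)
    (hg : ContinuousOn g (univ ×ˢ Ioc (0 : ℝ) 1))
    (hge : ∀ p : ℝ × ℝ, p.2 ∈ Ioo (0 : ℝ) 1 → g p = pdy w p)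
    -- boundary conditions
    (hbed : ∀ ξ : ℝ, w (ξ, 0) = 0)
    (htop : ∀ ξ : ℝ, g (ξ, 1) = w (ξ, 1) / F ^ 2)
    -- decay as `|ξ| → ∞`, uniformly in `η`
    (hdecay : ∀ ε > 0, ∃ R : ℝ, ∀ p : ℝ × ℝ, R ≤ |p.1| → p.2 ∈ Icc (0 : ℝ) 1 → |w p| < ε) :
    ∀ p : ℝ × ℝ, p.2 ∈ Icc (0 : ℝ) 1 → w p = 0 := by
  have hκ : (F ^ 2)⁻¹ < 1 := inv_lt_one_of_one_lt₀ hF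
  intro p hp
  have hle := nonpos_of_robin_condition hκ hcont hharm hg hge (fun ξ => (hbed ξ).le)
    (fun ξ => by rw [htop, div_eq_inv_mul])
    (fun ε hε => (hdecay ε hε).imp fun R hR q h₁ h₂ => (abs_lt.1 (hR q h₁ h₂)).2) p hp
  have hge' := nonpos_of_robin_condition hκ hcont.neg hharm.neg hg.neg
    (fun q hq => by simp [pdy_neg, hge q hq]) (fun ξ => by simp [hbed ξ])
    (fun ξ => by simp [htop, div_eq_inv_mul])
    (fun ε hε => (hdecay ε hε).imp fun R hR q h₁ h₂ => neg_lt.1 (abs_lt.1 (hR q h₁ h₂)).1) p hp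
  simp only [Pi.neg_apply, neg_nonpos] at hge'
  exact le_antisymm hle hge'

theorem statement4 (F : ℝ) (hF0 : 0 < F) (hF : 1 < F ^ 2)
    (w : ℝ × ℝ → ℝ)
    (hcont : ContinuousOn w (univ ×ˢ Icc (0 : ℝ) 1))
    (hbdd : ∃ C : ℝ, ∀ p ∈ univ ×ˢ Icc (0 : ℝ) 1, |w p| ≤ C)
    (hharm : HarmonicOnR2 w (univ ×ˢ Ioo (0 : ℝ) 1))
    -- `∂_η w` extends continuously to the top boundary, with extension `g`
    (g : ℝ × ℝ → ℝ)
    (hg : ContinuousOn g (univ ×ˢ Ioc (0 : ℝ) 1))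
    (hge : ∀ p : ℝ × ℝ, p.2 ∈ Ioo (0 : ℝ) 1 → g p = pdy w p)
    -- boundary conditions
    (hbed : ∀ ξ : ℝ, w (ξ, 0) = 0)
    (htop : ∀ ξ : ℝ, g (ξ, 1) = w (ξ, 1) / F ^ 2)
    -- decay as `|ξ| → ∞`, uniformly in `η`
    (hdecay : ∀ ε > 0, ∃ R : ℝ, ∀ p : ℝ × ℝ, R ≤ |p.1| → p.2 ∈ Icc (0 : ℝ) 1 → |w p| < ε) :
    ∀ p : ℝ × ℝ, p.2 ∈ Icc (0 : ℝ) 1 → w p = 0 :=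
  statement4_general F hF w hcont hharm g hg hge hbed htop hdecay
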